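/- Let 0 < α_min ≤ α_max < 2 and 0 < m ≤ M < ∞. For every ε > 0 there exists an integer r ≥ 1 such that, with ᾱ_1, …, ᾱ_r the Chebyshev points of [α_min, α_max] and L_1, …, L_r the associated Lagrange interpolation basis polynomials, one has |a^t − Σ_{q=1}^r L_q(t) a^{ᾱ_q}| ≤ ε for all a ∈ [m, M] and all t ∈ [α_min, α_max]. -/

import Mathlib

/-!
For fixed `a > 0`, interpolate `f t = a ^ t = exp (t log a)` at the `r` Chebyshev nodes by `P`,
and let `ω` be the node polynomial. Choosing `λ` so that `f - P - λ ω` also vanishes at `t`, it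
has `r + 1` zeros, and `r` applications of Rolle's theorem give the classical remainder
`a ^ t - P t = (log a) ^ r a ^ ξ / r! · ω t`. Every factor of `ω t` is at most `α_max - α_min`,
so with `K` bounding `|log a|` on `[m, M]` the error is at most
`exp (K max |α_min| |α_max|) (K (α_max - α_min)) ^ r / r!`, which tends to `0`.
If `α_min = α_max`, a single node interpolates exactly.
-/

open Real

noncomputable section

/-- The `i`-th Chebyshev point of the interval `[p,q]` among `r` points: the image of the
root `cos((2i+1)π/(2r))` of the degree-`r` Chebyshev polynomial of the first kind under
the affine map from `[-1,1]` onto `[p,q]`. -/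
def chebNode (p q : ℝ) (r : ℕ) (i : Fin r) : ℝ :=
  (p + q) / 2 + (q - p) / 2 * Real.cos ((2 * (i : ℕ) + 1) * Real.pi / (2 * r))

/-- The Lagrange interpolation basis polynomial associated with the Chebyshev nodes. -/
def lagBasis (p q : ℝ) (r : ℕ) (i : Fin r) (t : ℝ) : ℝ :=
  ∏ m ∈ Finset.univ.erase i,
    (t - chebNode p q r m) / (chebNode p q r i - chebNode p q r m)

open Polynomial Set Finset Lagrange

theorem exists_iteratedDeriv_eq_zero_of_strictMono {n : ℕ} {f : ℝ → ℝ} (hf : ContDiff ℝ n f)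
    {x : Fin (n + 1) → ℝ} (hx : StrictMono x) (hfx : ∀ i, f (x i) = 0) :
    ∃ ξ ∈ Icc (x 0) (x (Fin.last n)), iteratedDeriv n f ξ = 0 := by
  induction n generalizing f with
  | zero => exact ⟨x 0, left_mem_Icc.2 le_rfl, by simpa using hfx 0⟩
  | succ n ih =>
    have rolle (i : Fin (n + 1)) : ∃ y ∈ Ioo (x i.castSucc) (x i.succ), deriv f y = 0 :=
      exists_deriv_eq_zero (hx Fin.castSucc_lt_succ) hf.continuous.continuousOn
        ((hfx _).trans (hfx _).symm)
    choose y hy hdy using rolle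
    have hy_mono : StrictMono y := fun i j hij =>
      calc y i < x i.succ := (hy i).2
        _ ≤ x j.castSucc := hx.monotone (Fin.succ_le_castSucc_iff.2 hij)
        _ < y j := (hy j).1
    obtain ⟨ξ, hξ, hd⟩ := ih (contDiff_succ_iff_deriv.1 hf).2.2 hy_mono hdy
    exact ⟨ξ, ⟨(hy 0).1.le.trans hξ.1, hξ.2.trans (hy _).2.le⟩, by rwa [iteratedDeriv_succ']⟩

theorem exists_iteratedDeriv_eq_zero_of_card_eq {n : ℕ} {f : ℝ → ℝ} (hf : ContDiff ℝ n f)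
    {s : Finset ℝ} (hs : #s = n + 1) {p q : ℝ} (hsub : ↑s ⊆ Icc p q) (hfs : ∀ x ∈ s, f x = 0) :
    ∃ ξ ∈ Icc p q, iteratedDeriv n f ξ = 0 := by
  have hmem := s.orderEmbOfFin_mem hs
  obtain ⟨ξ, hξ, hd⟩ := exists_iteratedDeriv_eq_zero_of_strictMono hf
    (s.orderEmbOfFin hs).strictMono fun i => hfs _ (hmem i)
  exact ⟨ξ, Icc_subset_Icc (hsub (hmem 0)).1 (hsub (hmem _)).2 hξ, hd⟩

theorem Polynomial.iteratedDeriv_eval {𝕜 : Type*} [NontriviallyNormedField 𝕜] (P : 𝕜[X])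
    (n : ℕ) :
    iteratedDeriv n (fun x => P.eval x) = fun x => (derivative^[n] P).eval x := by
  induction n generalizing P with
  | zero => rfl
  | succ n ih =>
    have hP : _root_.deriv (fun x => P.eval x) = fun x => (derivative P).eval x :=
      _root_.funext fun _ => P.deriv
    rw [iteratedDeriv_succ', Function.iterate_succ_apply, ← ih, hP]

theorem Polynomial.iterate_derivative_natDegree {R : Type*} [Semiring R] (P : R[X]) :
    derivative^[P.natDegree] P = C (P.natDegree.factorial • P.leadingCoeff) := by
  rw [eq_C_of_natDegree_eq_zero (Nat.eq_zero_of_le_zero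
      ((natDegree_iterate_derivative P _).trans (Nat.sub_self _).le)),
    coeff_iterate_derivative, zero_add, Nat.descFactorial_self, leadingCoeff]

@[fun_prop]
theorem Polynomial.contDiff_eval {𝕜 : Type*} [NontriviallyNormedField 𝕜] (P : 𝕜[X])
    (n : WithTop ℕ∞) : ContDiff 𝕜 n fun x => P.eval x :=
  P.contDiff_aeval n

theorem abs_eval_nodal_le {ι : Type*} {s : Finset ι} {v : ι → ℝ} {p q t : ℝ}
    (hv : ∀ i ∈ s, v i ∈ Icc p q) (ht : t ∈ Icc p q) : |(nodal s v).eval t| ≤ (q - p) ^ #s := by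
  rw [eval_nodal, Finset.abs_prod, ← Finset.prod_const]
  exact Finset.prod_le_prod (fun _ _ => abs_nonneg _) fun i hi =>
    abs_sub_le_of_le_of_le ht.1 ht.2 (hv i hi).1 (hv i hi).2

theorem Lagrange.exists_sub_eval_interpolate_eq {ι : Type*} [DecidableEq ι] {s : Finset ι}
    {v : ι → ℝ} (hvs : Set.InjOn v s) {f : ℝ → ℝ} (hf : ContDiff ℝ #s f) {p q t : ℝ}
    (hv : ∀ i ∈ s, v i ∈ Icc p q) (ht : t ∈ Icc p q) :
    ∃ ξ ∈ Icc p q, f t - (interpolate s v (f ∘ v)).eval t =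
      iteratedDeriv #s f ξ / (#s).factorial * (nodal s v).eval t := by
  by_cases hnode : ∃ i ∈ s, t = v i
  · obtain ⟨i, hi, rfl⟩ := hnode
    refine ⟨v i, ht, ?_⟩
    rw [eval_interpolate_at_node _ hvs hi, eval_nodal_at_node hi, Function.comp_apply, sub_self,
      mul_zero]
  push Not at hnode
  set P := interpolate s v (f ∘ v)
  set W := nodal s v
  have hW : W.eval t ≠ 0 := eval_nodal_not_at_node hnode
  set c := (f t - P.eval t) / W.eval t with hc
  set g := fun x => f x - P.eval x - c * W.eval x
  have hg : ContDiff ℝ #s g := by fun_prop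
  have hzero : ∀ x ∈ insert t (s.image v), g x = 0 := by
    intro x hx
    rcases Finset.mem_insert.1 hx with rfl | hx
    · simp only [g, hc, div_mul_cancel₀ _ hW, sub_self]
    · obtain ⟨i, hi, rfl⟩ := Finset.mem_image.1 hx
      simp only [g, P, W, eval_interpolate_at_node _ hvs hi, eval_nodal_at_node hi,
        Function.comp_apply, mul_zero, sub_self]
  have hcard : #(insert t (s.image v)) = #s + 1 := by
    rw [card_insert_of_notMem, card_image_of_injOn hvs]
    simpa [eq_comm] using hnode
  have hsub : ↑(insert t (s.image v)) ⊆ Icc p q := by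
    rw [Finset.coe_insert, Finset.coe_image]
    exact Set.insert_subset ht (Set.image_subset_iff.2 hv)
  obtain ⟨ξ, hξ, hgξ⟩ := exists_iteratedDeriv_eq_zero_of_card_eq hg hcard hsub hzero
  have hPs : derivative^[#s] P = 0 :=
    iterate_derivative_eq_zero_of_degree_lt (degree_interpolate_lt _ hvs)
  have hWs : derivative^[#s] W = C ((#s).factorial : ℝ) := by
    simpa [W, natDegree_nodal, nodal_monic.leadingCoeff] using
      (nodal s v).iterate_derivative_natDegree
  have hfξ : iteratedDeriv #s f ξ = c * (#s).factorial := by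
    rw [iteratedDeriv_fun_sub (by fun_prop) (by fun_prop), iteratedDeriv_fun_sub (by fun_prop)
      (by fun_prop), iteratedDeriv_const_mul _ (by fun_prop), iteratedDeriv_eval,
      iteratedDeriv_eval, hPs, hWs] at hgξ
    simpa [sub_eq_zero] using hgξ
  refine ⟨ξ, hξ, ?_⟩
  rw [hfξ, mul_div_cancel_right₀ _ (Nat.cast_ne_zero.2 (Nat.factorial_ne_zero _)), hc,
    div_mul_cancel₀ _ hW]

theorem chebNode_mem_Icc {p q : ℝ} (hpq : p ≤ q) {r : ℕ} (i : Fin r) :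
    chebNode p q r i ∈ Icc p q := by
  have h1 := neg_one_le_cos ((2 * (i : ℕ) + 1) * π / (2 * r))
  have h2 := cos_le_one ((2 * (i : ℕ) + 1) * π / (2 * r))
  constructor <;> unfold chebNode <;> nlinarith

theorem chebNode_strictAnti {p q : ℝ} (hpq : p < q) (r : ℕ) : StrictAnti (chebNode p q r) := by
  intro i j hij
  have hr : (0 : ℝ) < r := by exact_mod_cast i.pos
  have hangle (k : Fin r) : (2 * (k : ℕ) + 1) * π / (2 * r) ∈ Icc 0 π := by
    have hk : ((k : ℕ) : ℝ) + 1 ≤ r := by exact_mod_cast k.isLt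
    refine ⟨by positivity, (div_le_iff₀ (by positivity)).2 ?_⟩
    nlinarith [pi_pos]
  have hlt : (2 * (i : ℕ) + 1) * π / (2 * r) < (2 * (j : ℕ) + 1) * π / (2 * r) := by
    gcongr
    exact_mod_cast hij
  have hcos := strictAntiOn_cos (hangle i) (hangle j) hlt
  unfold chebNode
  gcongr

theorem sum_lagBasis_mul_eq_eval_interpolate (p q : ℝ) (r : ℕ) (g : ℝ → ℝ) (t : ℝ) :
    ∑ i, lagBasis p q r i t * g (chebNode p q r i) =
      (interpolate univ (chebNode p q r) (g ∘ chebNode p q r)).eval t := by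
  simp [interpolate_apply, eval_finsetSum, Lagrange.basis, basisDivisor, eval_prod, lagBasis,
    mul_comm, div_eq_inv_mul]

theorem abs_rpow_sub_sum_lagBasis_mul_rpow_le {p q a t : ℝ} (hpq : p < q) (ha : 0 < a) (r : ℕ)
    (ht : t ∈ Icc p q) :
    |a ^ t - ∑ i, lagBasis p q r i t * a ^ chebNode p q r i| ≤
      exp (|log a| * max |p| |q|) * ((|log a| * (q - p)) ^ r / r.factorial) := by
  obtain ⟨ξ, hξ, herr⟩ := exists_sub_eval_interpolate_eq (f := fun x => exp (log a * x))
    (chebNode_strictAnti hpq r).injective.injOn (by fun_prop)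
    (fun i _ => chebNode_mem_Icc hpq.le i) ht
  rw [card_univ, Fintype.card_fin, iteratedDeriv_exp_const_mul] at herr
  simp only [rpow_def_of_pos ha]
  rw [sum_lagBasis_mul_eq_eval_interpolate p q r (fun x => exp (log a * x)), herr]
  have hexp : log a * ξ ≤ |log a| * max |p| |q| :=
    calc log a * ξ ≤ |log a| * |ξ| := (le_abs_self _).trans (abs_mul _ _).le
      _ ≤ |log a| * max |p| |q| := by gcongr; exact abs_le_max_abs_abs hξ.1 hξ.2
  calc _ = |log a| ^ r * exp (log a * ξ) / r.factorial *
        |(nodal univ (chebNode p q r)).eval t| := by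
        rw [abs_mul, abs_div, abs_mul, abs_pow, abs_exp, Nat.abs_cast]
    _ ≤ |log a| ^ r * exp (|log a| * max |p| |q|) / r.factorial * (q - p) ^ r := by
        gcongr
        simpa using abs_eval_nodal_le (s := univ) (fun i _ => chebNode_mem_Icc hpq.le i) ht
    _ = _ := by rw [mul_pow]; ring

theorem stmt8_general (αmin αmax : ℝ)
    (m M : ℝ) (hm : 0 < m) :
    ∀ ε : ℝ, 0 < ε → ∃ r : ℕ, 1 ≤ r ∧
      ∀ a ∈ Set.Icc m M, ∀ t ∈ Set.Icc αmin αmax,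
        |a ^ t - ∑ i : Fin r, lagBasis αmin αmax r i t * a ^ chebNode αmin αmax r i| ≤ ε := by
  intro ε hε
  rcases le_or_gt αmax αmin with hqp | hpq
  · refine ⟨1, le_rfl, fun a _ t ht => ?_⟩
    obtain rfl : αmin = t := le_antisymm ht.1 (ht.2.trans hqp)
    obtain rfl : αmax = αmin := le_antisymm hqp ht.2
    simp [lagBasis, chebNode, hε.le]
  set K := max |log m| |log M|
  set B := max |αmin| |αmax|
  have hlim := ((FloorSemiring.tendsto_pow_div_factorial_atTop (K * (αmax - αmin))).const_mul
    (exp (K * B))).eventually_lt_const (by simpa using hε)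
  obtain ⟨r, hr, hr1⟩ := (hlim.and (Filter.eventually_ge_atTop 1)).exists
  refine ⟨r, hr1, fun a ha t ht => ?_⟩
  have hK : |log a| ≤ K :=
    abs_le_max_abs_abs (log_le_log hm ha.1) (log_le_log (hm.trans_le ha.1) ha.2)
  calc _ ≤ exp (|log a| * B) * ((|log a| * (αmax - αmin)) ^ r / r.factorial) :=
        abs_rpow_sub_sum_lagBasis_mul_rpow_le hpq (hm.trans_le ha.1) r ht
    _ ≤ exp (K * B) * ((K * (αmax - αmin)) ^ r / r.factorial) := by gcongr
    _ ≤ ε := hr.le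

/-- Uniform low-rank approximation of `(a,t) ↦ a^t` by Chebyshev–Lagrange interpolation
in the exponent: for every `ε > 0` there is `r ≥ 1` with
`|a^t - Σ_q L_q(t) a^{ᾱ_q}| ≤ ε` for all `a ∈ [m,M]` and `t ∈ [α_min, α_max]`. -/
theorem stmt8 (αmin αmax : ℝ) (h1 : 0 < αmin) (h2 : αmin ≤ αmax) (h3 : αmax < 2)
    (m M : ℝ) (hm : 0 < m) (hmM : m ≤ M) :
    ∀ ε : ℝ, 0 < ε → ∃ r : ℕ, 1 ≤ r ∧
      ∀ a ∈ Set.Icc m M, ∀ t ∈ Set.Icc αmin αmax,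
        |a ^ t - ∑ i : Fin r, lagBasis αmin αmax r i t * a ^ chebNode αmin αmax r i| ≤ ε :=
  stmt8_general αmin αmax m M hm
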